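/- Let N be an abelian normal subgroup of a finite group G with cyclic quotient G/N. Then G is unramified over N: every irreducible complex character of G restricts to N as a multiplicity-free character or a multiple of the trivial character. -/

import Mathlib

open scoped BigOperators

noncomputable def charInner (G : Type) [Group G] (φ ψ : G → ℂ) : ℂ :=
  (Nat.card G : ℂ)⁻¹ * ∑ᶠ g, φ g * (starRingEnd ℂ) (ψ g)

/-- `χ` is the character of some irreducible complex representation of `G`. -/
def IsIrrChar (G : Type) [Group G] (χ : G → ℂ) : Prop :=
  ∃ ρ : FDRep ℂ G, CategoryTheory.Simple ρ ∧ FDRep.character ρ = χ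

/-- A class function is multiplicity free if it pairs with each irreducible
character with multiplicity at most one. -/
def MultFree (G : Type) [Group G] (φ : G → ℂ) : Prop :=
  ∀ μ : G → ℂ, IsIrrChar G μ → charInner G φ μ = 0 ∨ charInner G φ μ = 1

/-- `G` is unramified over `N`: every irreducible character of `G` restricts to `N`
multiplicity-freely or as a multiple of the trivial character. -/
def UnramifiedOver (G : Type) [Group G] (N : Subgroup G) : Prop :=
  ∀ χ : G → ℂ, IsIrrChar G χ →
    MultFree N (fun n : N => χ n) ∨ ∀ n : N, χ n = χ 1

def PseudoUnramifiedOver (G : Type) [Group G] (N : Subgroup G) : Prop :=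
  ∀ μ : ↥N → ℂ, IsIrrChar ↥N μ →
    ∃ χ : G → ℂ, IsIrrChar G χ ∧ charInner ↥N (fun n : N => χ n) μ ≠ 0 ∧
      MultFree ↥N (fun n : N => χ n)

/-- The conjugate character `ᵍμ(n) = μ(g⁻¹ n g)`. -/
def conjChar {G : Type} [Group G] (N : Subgroup G) [hN : N.Normal] (g : G)
    (μ : ↥N → ℂ) : ↥N → ℂ :=
  fun n => μ ⟨g⁻¹ * ↑n * g, hN.conj_mem' ↑n n.2 g⟩

lemma conjChar_mul {G : Type} [Group G] (N : Subgroup G) [N.Normal] (a b : G)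
    (μ : ↥N → ℂ) : conjChar N (a * b) μ = conjChar N a (conjChar N b μ) := by
  funext n
  simp [conjChar, mul_assoc]

lemma conjChar_one {G : Type} [Group G] (N : Subgroup G) [N.Normal]
    (μ : ↥N → ℂ) : conjChar N 1 μ = μ := by
  funext n
  simp [conjChar]

/-- The inertia subgroup of μ. -/
def inertia {G : Type} [Group G] (N : Subgroup G) [N.Normal] (μ : ↥N → ℂ) :
    Subgroup G where
  carrier := {g | conjChar N g μ = μ}
  one_mem' := conjChar_one N μ
  mul_mem' := by
    intro a b ha hb
    simp only [Set.mem_setOf_eq] at *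
    rw [conjChar_mul, hb, ha]
  inv_mem' := by
    intro a ha
    simp only [Set.mem_setOf_eq] at *
    conv_lhs => rw [← ha]
    rw [← conjChar_mul, inv_mul_cancel, conjChar_one]

/-!
Since `N` is abelian, every irreducible character `μ` of `N` is linear, and `⟨χ|_N, μ⟩` is the
dimension of the `μ`-eigenspace `W` of a representation `V` affording `χ`. The inertia group `I`
of `μ` is generated modulo `N` by one element `h`, because `I/N` is a subgroup of the cyclic group
`G/N`; choose an eigenvector `w ∈ W` of `h`. Every `x ∈ I` then acts on `w` by a scalar, while for
`x ∉ I` the vector `x • w` is an eigenvector for the different character `ˣμ`. Since the orbit of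
`w` spans `V`, projecting onto `W` gives `W = ℂ w`, so every multiplicity is `0` or `1`.
-/

open CategoryTheory

namespace Representation

variable {k H V : Type*} [Field k] [Group H] [AddCommGroup V] [Module k V]

/-- `ρ ⊗ μ⁻¹`. The `μ`-eigenspace of `ρ` is encoded as the invariants of this representation, so
that the averaging projection and the dimension formula for invariants apply to it. -/
def twist (ρ : Representation k H V) (μ : H →* k) : Representation k H V where
  toFun h := μ h⁻¹ • ρ h
  map_one' := by simp
  map_mul' a b := by
    rw [mul_inv_rev, map_mul, map_mul, mul_comm, smul_mul_smul_comm]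

variable {ρ : Representation k H V} {μ : H →* k}

lemma twist_apply (h : H) : ρ.twist μ h = μ h⁻¹ • ρ h := rfl

lemma mem_invariants_twist {v : V} : v ∈ (ρ.twist μ).invariants ↔ ∀ h, ρ h v = μ h • v := by
  refine forall_congr' fun h => ?_
  rw [twist_apply, LinearMap.smul_apply]
  constructor <;> intro hv
  · conv_rhs => rw [← hv]
    rw [smul_smul, ← map_mul, mul_inv_cancel, map_one, one_smul]
  · rw [hv, smul_smul, ← map_mul, inv_mul_cancel, map_one, one_smul]

lemma character_twist [FiniteDimensional k V] (h : H) :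
    (ρ.twist μ).character h = μ h⁻¹ * ρ.character h := by
  rw [character, twist_apply, map_smul, smul_eq_mul, character]

lemma card_inv_mul_sum_char_mul_eq_finrank_invariants_twist [FiniteDimensional k V] [Fintype H]
    [Invertible (Nat.card H : k)] :
    (Nat.card H : k)⁻¹ * ∑ h, ρ.character h * μ h⁻¹ = Module.finrank k (ρ.twist μ).invariants := by
  simp_rw [← card_inv_mul_sum_char_eq_finrank, character_twist, mul_comm]

lemma averageMap_twist_eq_zero [Fintype H] [Invertible (Fintype.card H : k)] {ν : H →* k}
    (hνμ : ν ≠ μ) {v : V} (hv : ∀ h, ρ h v = ν h • v) : (ρ.twist μ).averageMap v = 0 := by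
  let τ : H →* k :=
    { toFun h := μ h⁻¹ * ν h
      map_one' := by simp
      map_mul' a b := by rw [mul_inv_rev, map_mul, map_mul]; ring }
  have hτ : τ ≠ 1 := fun hτ => hνμ <| MonoidHom.ext fun h => calc
    ν h = μ h * (μ h⁻¹ * ν h) := by rw [← mul_assoc, ← map_mul, mul_inv_cancel, map_one, one_mul]
    _ = μ h := by rw [show μ h⁻¹ * ν h = 1 from DFunLike.congr_fun hτ h, mul_one]
  have hsum : ∑ h, (μ h⁻¹ * ν h) • v = 0 := by
    rw [← Finset.sum_smul]
    exact (sum_hom_units_eq_zero τ hτ).symm ▸ zero_smul k v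
  simp only [averageMap, GroupAlgebra.average, MonoidAlgebra.of_apply, map_smul, map_sum,
    asAlgebraHom_single, LinearMap.smul_apply, LinearMap.coe_sum, Finset.sum_apply,
    twist_apply, hv, smul_smul, one_mul, hsum, smul_zero]

variable (ρ)

lemma character_mul_of_finrank_eq_one [FiniteDimensional k V] (h : Module.finrank k V = 1)
    (a b : H) : ρ.character (a * b) = ρ.character a * ρ.character b := by
  obtain ⟨c, hc, -⟩ := (ρ a).existsUnique_eq_smul_id_of_finrank_eq_one h
  simp [character, hc, h, ← Module.End.one_eq_id]

namespace IsIrreducible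

variable [ρ.IsIrreducible]

lemma exists_monoidHom_coe_eq_character [IsAlgClosed k] [IsMulCommutative H]
    [FiniteDimensional k V] : ∃ μ : H →* k, ⇑μ = ρ.character := by
  have h := finrank_eq_one_of_isMulCommutative ρ
  exact ⟨{ toFun := ρ.character
           map_one' := by rw [char_one, h, Nat.cast_one]
           map_mul' := character_mul_of_finrank_eq_one ρ h }, rfl⟩

lemma span_orbit_eq_top {v : V} (hv : v ≠ 0) :
    Submodule.span k (Set.range fun h => ρ h v) = ⊤ := by
  let U : Subrepresentation ρ :=
    { toSubmodule := Submodule.span k (Set.range fun h => ρ h v)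
      apply_mem_toSubmodule g := by
        suffices Submodule.span k (Set.range fun h => ρ h v) ≤
            (Submodule.span k (Set.range fun h => ρ h v)).comap (ρ g) from fun u hu => this hu
        rw [Submodule.span_le]
        rintro - ⟨h, rfl⟩
        exact Submodule.subset_span ⟨g * h, by simp⟩ }
  refine congrArg Subrepresentation.toSubmodule ((eq_bot_or_eq_top U).resolve_left fun hU => hv ?_)
  have hvU : v ∈ U.toSubmodule := Submodule.subset_span ⟨1, by simp⟩
  rwa [hU] at hvU

lemma le_span_singleton_of_isProj {W : Submodule k V} {P : V →ₗ[k] V}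
    (hP : LinearMap.IsProj W P) {w : V} (hw : w ≠ 0) (hPw : ∀ h, P (ρ h w) ∈ k ∙ w) : W ≤ k ∙ w := by
  intro v hv
  have hv' : v ∈ Submodule.span k (Set.range fun h => ρ h w) :=
    (span_orbit_eq_top ρ hw).symm ▸ Submodule.mem_top
  rw [← hP.map_id v hv]
  refine (Submodule.span_le (p := (k ∙ w).comap P)).2 ?_ hv'
  rintro - ⟨h, rfl⟩
  exact hPw h

end IsIrreducible

end Representation

lemma FDRep.isIrreducible_of_simple {k G : Type} [Field k] [Group G] (V : FDRep k G) [Simple V] :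
    Representation.IsIrreducible V.ρ where
  exists_pair_ne := ⟨⊥, ⊤, fun h => id_nonzero V <| by
    ext v
    exact (Submodule.mem_bot k).1 (show v ∈ (⊥ : Subrepresentation V.ρ) from h ▸ trivial)⟩
  eq_bot_or_eq_top U := by
    let f : FDRep.of U.toRepresentation ⟶ V :=
      Action.Hom.mk (FGModuleCat.ofHom U.toSubmodule.subtype) fun _ => rfl
    have : Mono f := ConcreteCategory.mono_of_injective f Subtype.val_injective
    by_cases hf : f = 0
    · left
      ext v
      refine ⟨fun hv => ?_, fun hv => (Submodule.mem_bot k).1 hv ▸ U.toSubmodule.zero_mem⟩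
      have : ConcreteCategory.hom f ⟨v, hv⟩ = 0 := by rw [hf]; rfl
      exact this
    · right
      have : IsIso f := (Simple.mono_isIso_iff_nonzero f).2 hf
      ext v
      refine ⟨fun _ => trivial, fun _ => ?_⟩
      obtain ⟨u, rfl⟩ := (ConcreteCategory.bijective_of_isIso f).2 v
      exact u.2

lemma MonoidHom.starRingEnd_apply_eq_apply_inv {H : Type*} [Group H] [Finite H] (μ : H →* ℂ)
    (h : H) : starRingEnd ℂ (μ h) = μ h⁻¹ := by
  have hpow : μ h ^ orderOf h = 1 := by rw [← map_pow, pow_orderOf_eq_one, map_one]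
  rw [← Complex.inv_eq_conj (Complex.norm_eq_one_of_pow_eq_one hpow (orderOf_pos h).ne'),
    ← map_inv]

lemma charInner_eq_finrank_invariants_twist {H V : Type} [Group H] [Finite H] [AddCommGroup V]
    [Module ℂ V] [FiniteDimensional ℂ V] (ρ : Representation ℂ H V) (μ : H →* ℂ) :
    charInner H ρ.character μ = Module.finrank ℂ (ρ.twist μ).invariants := by
  have := Fintype.ofFinite H
  have : Invertible (Nat.card H : ℂ) := invertibleOfNonzero (Nat.cast_ne_zero.2 Nat.card_pos.ne')
  simp only [charInner, finsum_eq_sum_of_fintype, MonoidHom.starRingEnd_apply_eq_apply_inv]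
  exact Representation.card_inv_mul_sum_char_mul_eq_finrank_invariants_twist

lemma Subgroup.exists_pow_inv_mul_mem_of_isCyclic_quotient {G : Type*} [Group G] (N : Subgroup G)
    [N.Normal] [IsCyclic (G ⧸ N)] [Finite (G ⧸ N)] (I : Subgroup G) :
    ∃ h ∈ I, ∀ x ∈ I, ∃ m : ℕ, (h ^ m)⁻¹ * x ∈ N := by
  obtain ⟨q, hq⟩ :=
    (I.map (QuotientGroup.mk' N)).isCyclic_iff_exists_zpowers_eq_top.1 inferInstance
  obtain ⟨h, hhI, rfl⟩ : q ∈ I.map (QuotientGroup.mk' N) := hq ▸ mem_zpowers q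
  refine ⟨h, hhI, fun x hx => ?_⟩
  obtain ⟨m, hm⟩ : (x : G ⧸ N) ∈ Submonoid.powers (h : G ⧸ N) :=
    mem_powers_iff_mem_zpowers.2 (hq ▸ ⟨x, hx, rfl⟩)
  exact ⟨m, QuotientGroup.eq.1 hm⟩

section Inertia

open Representation

variable {G : Type} [Group G] (N : Subgroup G) [N.Normal]

def conjCharHom (x : G) (μ : N →* ℂ) : N →* ℂ :=
  μ.comp (MulAut.conjNormal x⁻¹).toMonoidHom

lemma coe_conjCharHom (x : G) (μ : N →* ℂ) : ⇑(conjCharHom N x μ) = conjChar N x μ := by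
  funext n
  simp only [conjCharHom, conjChar, MonoidHom.comp_apply, MulEquiv.coe_toMonoidHom]
  congr 1
  ext
  rw [MulAut.conjNormal_apply, inv_inv]

lemma conjCharHom_eq_self_iff {x : G} {μ : N →* ℂ} :
    conjCharHom N x μ = μ ↔ x ∈ inertia N μ := by
  rw [← DFunLike.coe_fn_eq, coe_conjCharHom]
  rfl

variable {V : Type} [AddCommGroup V] [Module ℂ V] (ρ : Representation ℂ G V)

lemma apply_mem_invariants_twist_conjCharHom {μ : N →* ℂ} {v : V}
    (hv : v ∈ (twist (ρ.comp N.subtype) μ).invariants) (x : G) :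
    ρ x v ∈ (twist (ρ.comp N.subtype) (conjCharHom N x μ)).invariants := by
  rw [mem_invariants_twist] at hv ⊢
  intro n
  have hn := hv ⟨x⁻¹ * n * x, (inferInstance : N.Normal).conj_mem' _ n.2 x⟩
  simp only [MonoidHom.comp_apply, Subgroup.coe_subtype] at hn ⊢
  rw [coe_conjCharHom, conjChar, ← map_smul, ← hn, ← Module.End.mul_apply, ← map_mul,
    ← Module.End.mul_apply, ← map_mul]
  group

theorem finrank_invariants_twist_le_one_of_isCyclic [Finite G] [FiniteDimensional ℂ V]
    [ρ.IsIrreducible] [IsCyclic (G ⧸ N)] (μ : N →* ℂ) :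
    Module.finrank ℂ (twist (ρ.comp N.subtype) μ).invariants ≤ 1 := by
  have := Fintype.ofFinite N
  have : Invertible (Fintype.card N : ℂ) :=
    invertibleOfNonzero (Nat.cast_ne_zero.2 Fintype.card_ne_zero)
  set W := (twist (ρ.comp N.subtype) μ).invariants
  rcases subsingleton_or_nontrivial W with hW | hW
  · exact Module.finrank_zero_of_subsingleton.trans_le zero_le_one
  obtain ⟨h, hhI, hgen⟩ := N.exists_pow_inv_mul_mem_of_isCyclic_quotient (inertia N μ)
  have hWh : ∀ v ∈ W, ρ h v ∈ W := fun v hv => by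
    simpa only [(conjCharHom_eq_self_iff N).2 hhI] using
      apply_mem_invariants_twist_conjCharHom N ρ hv h
  obtain ⟨c, hc⟩ := Module.End.exists_eigenvalue ((ρ h).restrict hWh)
  obtain ⟨⟨w, hwW⟩, hw⟩ := hc.exists_hasEigenvector
  have hw0 : w ≠ 0 := fun h0 => hw.2 (Subtype.ext h0)
  have hρw : Module.End.HasEigenvector (ρ h) c w := Module.End.hasEigenvector_iff.2
    ⟨Module.End.mem_eigenspace_iff.2 (congrArg Subtype.val hw.apply_eq_smul), hw0⟩
  have hspan : ∀ x ∈ inertia N μ, ρ x w ∈ ℂ ∙ w := by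
    intro x hx
    obtain ⟨m, hm⟩ := hgen x hx
    have hn := mem_invariants_twist.1 hwW ⟨_, hm⟩
    simp only [MonoidHom.comp_apply, Subgroup.coe_subtype] at hn
    rw [← mul_inv_cancel_left (h ^ m) x, map_mul, Module.End.mul_apply, hn, map_smul, map_pow,
      hρw.pow_apply]
    exact Submodule.smul_mem _ _ (Submodule.smul_mem _ _ (Submodule.mem_span_singleton_self w))
  have hP := isProj_averageMap (twist (ρ.comp N.subtype) μ)
  have hWw : W ≤ ℂ ∙ w := IsIrreducible.le_span_singleton_of_isProj ρ hP hw0 fun x => by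
    by_cases hx : x ∈ inertia N μ
    · have hxW := apply_mem_invariants_twist_conjCharHom N ρ hwW x
      rw [(conjCharHom_eq_self_iff N).2 hx] at hxW
      rw [hP.map_id _ hxW]
      exact hspan x hx
    · rw [averageMap_twist_eq_zero (mt (conjCharHom_eq_self_iff N).1 hx)
        (mem_invariants_twist.1 (apply_mem_invariants_twist_conjCharHom N ρ hwW x))]
      exact Submodule.zero_mem _
  calc Module.finrank ℂ W ≤ Module.finrank ℂ (ℂ ∙ w) := Submodule.finrank_mono hWw
    _ = 1 := finrank_span_singleton hw0

end Inertia

/-- If N is an abelian normal subgroup of a finite group G with cyclic quotient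
G/N, then G is unramified over N. -/
theorem stmt_17 {G : Type} [Group G] [Finite G] (N : Subgroup G) [N.Normal]
    (hab : ∀ a b : ↥N, a * b = b * a) (hcyc : IsCyclic (G ⧸ N)) :
    UnramifiedOver G N := by
  rintro χ ⟨V, hV, rfl⟩
  left
  rintro μ ⟨σ, hσ, rfl⟩
  have := FDRep.isIrreducible_of_simple V
  have := FDRep.isIrreducible_of_simple σ
  have : IsMulCommutative N := ⟨⟨hab⟩⟩
  obtain ⟨μ, hμ⟩ := Representation.IsIrreducible.exists_monoidHom_coe_eq_character σ.ρ
  have hinner : charInner N (fun n : N => V.character n) σ.character =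
      Module.finrank ℂ (Representation.twist (V.ρ.comp N.subtype) μ).invariants := by
    rw [← charInner_eq_finrank_invariants_twist, hμ]
    rfl
  rw [hinner]
  rcases Nat.le_one_iff_eq_zero_or_eq_one.1
      (finrank_invariants_twist_le_one_of_isCyclic N V.ρ μ) with h | h
  · exact Or.inl (by rw [h, Nat.cast_zero])
  · exact Or.inr (by rw [h, Nat.cast_one])
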